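/- arXiv:2211.07958 — 3 statements merged into one kernel-verified Lean document; each statement's English description precedes it below -/
import Mathlib

section
/- Let λ be a countable limit ordinal and let 𝒞 be the smallest collection of subsets of Baire space containing all Σ⁰_ξ sets for ξ < λ and closed under unions of Σ⁰_ξ-separated sequences for every ξ < λ. Then every set in 𝒞 is Δ⁰_λ. -/
/-- The additive Borel pointclasses `Σ⁰_ξ` on a topological space, for ordinals
`ξ ≥ 1`: `Σ⁰_1` is the class of open sets, and for `ξ > 1` a set is in `Σ⁰_ξ` if it is
open or a countable union of complements of sets in classes `Σ⁰_{ξ'}` with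
`1 ≤ ξ' < ξ`. -/
def Sigma0 (X : Type) [TopologicalSpace X] (ξ : Ordinal.{0}) : Set (Set X) :=
  {A | IsOpen A ∨ ∃ (f : ℕ → Set X) (o : ℕ → {o' : Ordinal.{0} // 1 ≤ o' ∧ o' < ξ}),
    (∀ n, (f n)ᶜ ∈ Sigma0 X (o n).1) ∧ A = ⋃ n, f n}
termination_by ξ
decreasing_by exact (o n).2.2

/-!
The complement of a separated union `⋃ Aₙ` (with `Aₙ ⊆ Uₙ` and the `Uₙ` pairwise disjoint
`Σ⁰_ξ` sets) is `(⋃ Uₙ)ᶜ ∪ ⋃ (Uₙ \ Aₙ)`: a `Π⁰_ξ` set together with a countable union of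
intersections of `Σ⁰_λ` sets. Hence `Δ⁰_λ` is closed under separated unions, and as it contains
every `Σ⁰_ξ` with `ξ < λ`, it contains the least such class. Here `Σ⁰_λ` is closed under
countable unions because open sets are `F_σ`, and under binary intersections because `λ` is a
limit.
-/

open Set Order Function

def Delta0 (X : Type) [TopologicalSpace X] (ξ : Ordinal.{0}) : Set (Set X) :=
  {A | A ∈ Sigma0 X ξ ∧ Aᶜ ∈ Sigma0 X ξ}

theorem Ordinal.two_lt_of_isSuccLimit {o : Ordinal} (h : IsSuccLimit o) : 2 < o := by
  simpa using Ordinal.natCast_lt_of_isSuccLimit h 2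

theorem Set.compl_iUnion_eq_of_subset_of_pairwise_disjoint {α ι : Type*} {A U : ι → Set α}
    (hAU : ∀ i, A i ⊆ U i) (hU : Pairwise (Disjoint on U)) :
    (⋃ i, A i)ᶜ = (⋃ i, U i)ᶜ ∪ ⋃ i, U i \ A i := by
  ext x
  simp only [mem_compl_iff, mem_iUnion, mem_union, mem_sdiff, not_exists]
  constructor
  · intro hx
    by_cases hxU : ∃ i, x ∈ U i
    · obtain ⟨i, hi⟩ := hxU
      exact Or.inr ⟨i, hi, hx i⟩
    · exact Or.inl fun i hi => hxU ⟨i, hi⟩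
  · rintro (hx | ⟨i, hxU, hxA⟩) j hj
    · exact hx j (hAU j hj)
    · obtain rfl | hji := eq_or_ne j i
      · exact hxA hj
      · exact (hU hji).ne_of_mem (hAU j hj) hxU rfl

variable {X : Type} [TopologicalSpace X] {ξ η : Ordinal.{0}}

theorem mem_sigma0_iff {A : Set X} :
    A ∈ Sigma0 X ξ ↔ IsOpen A ∨
      ∃ (f : ℕ → Set X) (o : ℕ → {o' : Ordinal.{0} // 1 ≤ o' ∧ o' < ξ}),
        (∀ n, (f n)ᶜ ∈ Sigma0 X (o n).1) ∧ A = ⋃ n, f n := by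
  rw [Sigma0]
  rfl

theorem IsOpen.mem_sigma0 {A : Set X} (h : IsOpen A) (ξ : Ordinal.{0}) : A ∈ Sigma0 X ξ :=
  mem_sigma0_iff.2 (Or.inl h)

theorem sigma0_mono : Monotone (Sigma0 X) := by
  intro ξ η h A hA
  rcases mem_sigma0_iff.1 hA with hA | ⟨f, o, hf, rfl⟩
  · exact hA.mem_sigma0 η
  · exact mem_sigma0_iff.2 <| Or.inr
      ⟨f, fun n => ⟨(o n).1, (o n).2.1, (o n).2.2.trans_le h⟩, hf, rfl⟩

theorem mem_sigma0_of_compl_mem {A : Set X} (h1 : 1 ≤ ξ) (hξη : ξ < η)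
    (hA : Aᶜ ∈ Sigma0 X ξ) : A ∈ Sigma0 X η :=
  mem_sigma0_iff.2 <| Or.inr
    ⟨fun _ => A, fun _ => ⟨ξ, h1, hξη⟩, fun _ => hA, (iUnion_const A).symm⟩

theorem compl_mem_sigma0 {A : Set X} (h1 : 1 ≤ ξ) (hξη : ξ < η) (hA : A ∈ Sigma0 X ξ) :
    Aᶜ ∈ Sigma0 X η :=
  mem_sigma0_of_compl_mem h1 hξη (by rwa [compl_compl])

theorem sigma0_subset_delta0 (h1 : 1 ≤ ξ) (hξη : ξ < η) : Sigma0 X ξ ⊆ Delta0 X η :=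
  fun _ hA => ⟨sigma0_mono hξη.le hA, compl_mem_sigma0 h1 hξη hA⟩

section PerfectlyNormal

variable [PerfectlyNormalSpace X]

theorem mem_sigma0_iff_of_one_lt {A : Set X} (hη : 1 < η) :
    A ∈ Sigma0 X η ↔ ∃ (f : ℕ → Set X) (o : ℕ → {o' : Ordinal.{0} // 1 ≤ o' ∧ o' < η}),
      (∀ n, (f n)ᶜ ∈ Sigma0 X (o n).1) ∧ A = ⋃ n, f n := by
  refine ⟨fun hA => ?_, fun h => mem_sigma0_iff.2 (Or.inr h)⟩
  rcases mem_sigma0_iff.1 hA with hA | h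
  · obtain ⟨G, hG, hAG⟩ := isGδ_iff_eq_iInter_nat.1 hA.isClosed_compl.isGδ
    refine ⟨fun n => (G n)ᶜ, fun _ => ⟨1, le_rfl, hη⟩, fun n => ?_, ?_⟩
    · simpa using (hG n).mem_sigma0 1
    · rw [← compl_iInter, ← hAG, compl_compl]
  · exact h

theorem iUnion_mem_sigma0 {ι : Type*} [Countable ι] {A : ι → Set X} (hη : 1 < η)
    (hA : ∀ i, A i ∈ Sigma0 X η) : ⋃ i, A i ∈ Sigma0 X η := by
  cases isEmpty_or_nonempty ι
  · simpa using isOpen_empty.mem_sigma0 η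
  obtain ⟨e, he⟩ := exists_surjective_nat ι
  choose f o hf hAf using fun n => (mem_sigma0_iff_of_one_lt hη).1 (hA (e n))
  refine (mem_sigma0_iff_of_one_lt hη).2
    ⟨fun k => f k.unpair.1 k.unpair.2, fun k => o k.unpair.1 k.unpair.2, fun k => hf _ _, ?_⟩
  rw [iUnion_unpair f, ← he.iUnion_comp]
  exact iUnion_congr hAf

theorem union_mem_sigma0 {A B : Set X} (hη : 1 < η) (hA : A ∈ Sigma0 X η)
    (hB : B ∈ Sigma0 X η) : A ∪ B ∈ Sigma0 X η := by
  rw [union_eq_iUnion]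
  exact iUnion_mem_sigma0 hη (Bool.forall_bool.2 ⟨hB, hA⟩)

theorem inter_mem_sigma0 {A B : Set X} (hη : IsSuccLimit η) (hA : A ∈ Sigma0 X η)
    (hB : B ∈ Sigma0 X η) : A ∩ B ∈ Sigma0 X η := by
  have h2 := Ordinal.two_lt_of_isSuccLimit hη
  have h1 : 1 < η := one_lt_two.trans h2
  obtain ⟨f, o, hf, rfl⟩ := (mem_sigma0_iff_of_one_lt h1).1 hA
  obtain ⟨g, p, hg, rfl⟩ := (mem_sigma0_iff_of_one_lt h1).1 hB
  rw [iUnion_inter]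
  refine iUnion_mem_sigma0 h1 fun n => ?_
  rw [inter_iUnion]
  refine iUnion_mem_sigma0 h1 fun m => ?_
  -- `f n ∩ g m` is `Π⁰_q` for some `q < η`, as `η` is a limit
  set q := max (max (o n).1 (p m).1) 2
  have hq : 1 < q := one_lt_two.trans_le (le_max_right _ _)
  refine mem_sigma0_of_compl_mem hq.le (max_lt (max_lt (o n).2.2 (p m).2.2) h2) ?_
  rw [compl_inter]
  exact union_mem_sigma0 hq
    (sigma0_mono ((le_max_left _ _).trans (le_max_left _ _)) (hf n))
    (sigma0_mono ((le_max_right _ _).trans (le_max_left _ _)) (hg m))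

theorem iUnion_mem_delta0_of_separated {A U : ℕ → Set X} (hη : IsSuccLimit η) (hξη : ξ < η)
    (hA : ∀ n, A n ∈ Delta0 X η) (hU : ∀ n, U n ∈ Sigma0 X ξ)
    (hdisj : Pairwise (Disjoint on U)) (hAU : ∀ n, A n ⊆ U n) :
    ⋃ n, A n ∈ Delta0 X η := by
  have h2 := Ordinal.two_lt_of_isSuccLimit hη
  have hη1 : 1 < η := one_lt_two.trans h2
  have hξ2 : 1 < max ξ 2 := one_lt_two.trans_le (le_max_right _ _)
  refine ⟨iUnion_mem_sigma0 hη1 fun n => (hA n).1, ?_⟩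
  rw [compl_iUnion_eq_of_subset_of_pairwise_disjoint hAU hdisj]
  refine union_mem_sigma0 hη1 ?_ (iUnion_mem_sigma0 hη1 fun n => ?_)
  · exact compl_mem_sigma0 hξ2.le (max_lt hξη h2)
      (iUnion_mem_sigma0 hξ2 fun n => sigma0_mono (le_max_left _ _) (hU n))
  · exact inter_mem_sigma0 hη (sigma0_mono hξη.le (hU n)) (hA n).2

end PerfectlyNormal

theorem wadge_easy_inclusion_general (lam : Ordinal.{0}) (hlim : Order.IsSuccLimit lam) :
    ⋂₀ {D : Set (Set (ℕ → ℕ)) |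
        (∀ ξ : Ordinal.{0}, 1 ≤ ξ → ξ < lam → Sigma0 (ℕ → ℕ) ξ ⊆ D) ∧
        (∀ (ξ : Ordinal.{0}) (A U : ℕ → Set (ℕ → ℕ)), 1 ≤ ξ → ξ < lam →
          (∀ n, A n ∈ D) →
          (∀ n, U n ∈ Sigma0 (ℕ → ℕ) ξ) → Pairwise (Function.onFun Disjoint U) →
          (∀ n, A n ⊆ U n) → (⋃ n, A n) ∈ D)}
      ⊆ {A | A ∈ Sigma0 (ℕ → ℕ) lam ∧ Aᶜ ∈ Sigma0 (ℕ → ℕ) lam} :=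
  sInter_subset_of_mem (t := Delta0 (ℕ → ℕ) lam)
    ⟨fun _ h1 hξ => sigma0_subset_delta0 h1 hξ,
      fun _ _ _ _ hξ hA hU hdisj hAU => iUnion_mem_delta0_of_separated hlim hξ hA hU hdisj hAU⟩

/-- Wadge's theorem, easy inclusion: for a countable limit ordinal `λ`, every set in
the smallest collection of subsets of Baire space containing all `Σ⁰_ξ` sets for
`1 ≤ ξ < λ` and closed under unions of `Σ⁰_ξ`-separated sequences for all
`1 ≤ ξ < λ` is `Δ⁰_λ`. -/
theorem wadge_easy_inclusion (lam : Ordinal.{0}) (hlim : Order.IsSuccLimit lam)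
    (hcount : lam.card ≤ Cardinal.aleph0) :
    ⋂₀ {D : Set (Set (ℕ → ℕ)) |
        (∀ ξ : Ordinal.{0}, 1 ≤ ξ → ξ < lam → Sigma0 (ℕ → ℕ) ξ ⊆ D) ∧
        (∀ (ξ : Ordinal.{0}) (A U : ℕ → Set (ℕ → ℕ)), 1 ≤ ξ → ξ < lam →
          (∀ n, A n ∈ D) →
          (∀ n, U n ∈ Sigma0 (ℕ → ℕ) ξ) → Pairwise (Function.onFun Disjoint U) →
          (∀ n, A n ⊆ U n) → (⋃ n, A n) ∈ D)}
      ⊆ {A | A ∈ Sigma0 (ℕ → ℕ) lam ∧ Aᶜ ∈ Sigma0 (ℕ → ℕ) lam} :=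
  wadge_easy_inclusion_general lam hlim
end

section
/- Let F : ℕ^ℕ → ℕ and suppose there is a function f : ℕ^{<ω} → ℕ and a countable family of Borel sets [σ] of additive class ξ (ξ ≥ 1) indexed by σ ∈ ℕ^{<ω}, such that the sets {x : σ is 'true' for x} are Σ⁰_ξ uniformly and for every x, F(x) = f(σ) for all but finitely many σ 'true' for x, where the collection of σ of each fixed tree-height partitions ℕ^ℕ. Then F is Σ⁰_{ξ+1}-measurable. -/
lemma sigma0_def (X : Type) [TopologicalSpace X] (ξ : Ordinal.{0}) :
    Sigma0 X ξ = {A | IsOpen A ∨ ∃ (f : ℕ → Set X)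
      (o : ℕ → {o' : Ordinal.{0} // 1 ≤ o' ∧ o' < ξ}),
      (∀ n, (f n)ᶜ ∈ Sigma0 X (o n).1) ∧ A = ⋃ n, f n} := by
  rw [Sigma0]

lemma sigma0_empty (X : Type) [TopologicalSpace X] (ξ : Ordinal.{0}) :
    (∅ : Set X) ∈ Sigma0 X ξ := by
  rw [sigma0_def]; exact Or.inl isOpen_empty

/-- Every open subset of Baire space is a countable union of complements of open sets. -/
lemma open_eq_iUnion_compl {U : Set (ℕ → ℕ)} (hU : IsOpen U) :
    ∃ V : ℕ → Set (ℕ → ℕ), (∀ n, IsOpen (V n)) ∧ U = ⋃ n, (V n)ᶜ := by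
  obtain ⟨T, hTopen, hTc, hTeq⟩ : IsGδ Uᶜ := (isClosed_compl_iff.2 hU).isGδ
  have hne : (insert Set.univ T).Nonempty := ⟨_, Set.mem_insert _ _⟩
  obtain ⟨g, hg⟩ := (hTc.insert Set.univ).exists_eq_range hne
  refine ⟨g, fun n => ?_, ?_⟩
  · have : g n ∈ insert Set.univ T := hg ▸ Set.mem_range_self n
    rcases this with h | h
    · rw [h]; exact isOpen_univ
    · exact hTopen _ h
  · have h1 : Uᶜ = ⋂ n, g n := by
      rw [hTeq]
      ext x
      simp only [Set.mem_sInter, Set.mem_iInter]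
      constructor
      · intro h n
        have : g n ∈ insert Set.univ T := hg ▸ Set.mem_range_self n
        rcases this with h' | h'
        · rw [h']; trivial
        · exact h _ h'
      · intro h t ht
        have : t ∈ insert Set.univ T := Set.mem_insert_of_mem _ ht
        rw [hg] at this
        obtain ⟨n, rfl⟩ := this
        exact h n
    have := congrArg compl h1
    rw [compl_compl, Set.compl_iInter] at this
    exact this

/-- `Sigma0` on Baire space is closed under countable unions, for `ξ ≥ 1`. -/
lemma sigma0_iUnion {ξ : Ordinal.{0}} (hξ : 1 ≤ ξ) (g : ℕ → Set (ℕ → ℕ))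
    (hg : ∀ n, g n ∈ Sigma0 (ℕ → ℕ) ξ) : (⋃ n, g n) ∈ Sigma0 (ℕ → ℕ) ξ := by
  rcases eq_or_lt_of_le hξ with rfl | h1
  · -- ξ = 1 : everything is open
    have : ∀ n, IsOpen (g n) := by
      intro n
      have := hg n
      rw [sigma0_def] at this
      rcases this with h | ⟨f, o, _, _⟩
      · exact h
      · exact absurd (o 0).2.2 (not_lt.2 (o 0).2.1)
    rw [sigma0_def]
    exact Or.inl (isOpen_iUnion this)
  · -- ξ > 1 : rewrite each g n as a countable union of complements
    have key : ∀ n, ∃ (f : ℕ → Set (ℕ → ℕ))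
        (o : ℕ → {o' : Ordinal.{0} // 1 ≤ o' ∧ o' < ξ}),
        (∀ m, (f m)ᶜ ∈ Sigma0 (ℕ → ℕ) (o m).1) ∧ g n = ⋃ m, f m := by
      intro n
      have := hg n
      rw [sigma0_def] at this
      rcases this with h | h
      · obtain ⟨V, hVopen, hVeq⟩ := open_eq_iUnion_compl h
        refine ⟨fun m => (V m)ᶜ, fun _ => ⟨1, le_refl 1, h1⟩, fun m => ?_, hVeq⟩
        rw [compl_compl, sigma0_def]
        exact Or.inl (hVopen m)
      · exact h
    choose f o hfo hfeq using key
    rw [sigma0_def]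
    refine Or.inr ⟨fun m => f (Nat.unpair m).1 (Nat.unpair m).2,
      fun m => o (Nat.unpair m).1 (Nat.unpair m).2, fun m => hfo _ _, ?_⟩
    ext x
    simp only [Set.mem_iUnion]
    constructor
    · rintro ⟨n, hn⟩
      rw [hfeq n] at hn
      obtain ⟨m, hm⟩ := Set.mem_iUnion.1 hn
      exact ⟨Nat.pair n m, by simpa [Nat.unpair_pair] using hm⟩
    · rintro ⟨m, hm⟩
      refine ⟨(Nat.unpair m).1, ?_⟩
      rw [hfeq]
      exact Set.mem_iUnion.2 ⟨(Nat.unpair m).2, hm⟩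

/-- Suppose `F : ℕ^ℕ → ℕ`, `f : ℕ^{<ω} → ℕ`, and for each string `σ` a `Σ⁰_ξ` set
`Tr σ` ("σ is true for x") is given (ξ ≥ 1), such that the sets `Tr σ` for `σ` of each
fixed tree-height `ht σ = k` partition Baire space, and for every `x` we have
`F x = f σ` for all but finitely many `σ` true for `x`.  Then `F` is
`Σ⁰_{ξ+1}`-measurable. -/
theorem limit_approx_measurable (ξ : Ordinal.{0}) (hξ : 1 ≤ ξ)
    (F : (ℕ → ℕ) → ℕ) (f : List ℕ → ℕ)
    (Tr : List ℕ → Set (ℕ → ℕ)) (ht : List ℕ → ℕ)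
    (hTr : ∀ σ, Tr σ ∈ Sigma0 (ℕ → ℕ) ξ)
    (hcover : ∀ (k : ℕ) (x : ℕ → ℕ), ∃ σ, ht σ = k ∧ x ∈ Tr σ)
    (hdisj : ∀ (k : ℕ) (σ τ : List ℕ), ht σ = k → ht τ = k → σ ≠ τ →
      Disjoint (Tr σ) (Tr τ))
    (hstab : ∀ x : ℕ → ℕ, {σ : List ℕ | x ∈ Tr σ ∧ f σ ≠ F x}.Finite) :
    ∀ n : ℕ, F ⁻¹' {n} ∈ Sigma0 (ℕ → ℕ) (ξ + 1) := by
  intro n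
  -- enumeration of `List ℕ`
  let e : ℕ → List ℕ := fun i => Denumerable.ofNat (List ℕ) i
  have esurj : ∀ σ : List ℕ, ∃ i, e i = σ := fun σ =>
    ⟨Encodable.encode σ, Denumerable.ofNat_encode σ⟩
  -- level-k approximations
  let A : ℕ → Set (ℕ → ℕ) := fun k =>
    ⋃ i, if ht (e i) = k ∧ f (e i) = n then Tr (e i) else ∅
  have memA : ∀ k x, x ∈ A k ↔ ∃ σ, ht σ = k ∧ f σ = n ∧ x ∈ Tr σ := by
    intro k x
    simp only [A, Set.mem_iUnion]
    constructor
    · rintro ⟨i, hi⟩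
      by_cases h : ht (e i) = k ∧ f (e i) = n
      · rw [if_pos h] at hi; exact ⟨e i, h.1, h.2, hi⟩
      · rw [if_neg h] at hi; exact absurd hi (Set.notMem_empty x)
    · rintro ⟨σ, h1, h2, h3⟩
      obtain ⟨i, rfl⟩ := esurj σ
      exact ⟨i, by rw [if_pos ⟨h1, h2⟩]; exact h3⟩
  have hA : ∀ k, A k ∈ Sigma0 (ℕ → ℕ) ξ := by
    intro k
    apply sigma0_iUnion hξ
    intro i
    by_cases h : ht (e i) = k ∧ f (e i) = n
    · rw [if_pos h]; exact hTr _
    · rw [if_neg h]; exact sigma0_empty _ _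
  -- the complement of A k is also a countable union of the Tr σ
  have hAc : ∀ k, (A k)ᶜ ∈ Sigma0 (ℕ → ℕ) ξ := by
    intro k
    have hc : (A k)ᶜ = ⋃ i, if ht (e i) = k ∧ f (e i) ≠ n then Tr (e i) else ∅ := by
      ext x
      simp only [Set.mem_compl_iff, Set.mem_iUnion]
      constructor
      · intro hx
        obtain ⟨σ, hσk, hσx⟩ := hcover k x
        obtain ⟨i, rfl⟩ := esurj σ
        refine ⟨i, ?_⟩
        have hne : f (e i) ≠ n := by
          intro hfe
          exact hx ((memA k x).2 ⟨e i, hσk, hfe, hσx⟩)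
        rw [if_pos ⟨hσk, hne⟩]; exact hσx
      · rintro ⟨i, hi⟩ hx
        by_cases h : ht (e i) = k ∧ f (e i) ≠ n
        · rw [if_pos h] at hi
          obtain ⟨σ, hσk, hσn, hσx⟩ := (memA k x).1 hx
          have hne : σ ≠ e i := fun heq => h.2 (heq ▸ hσn)
          exact Set.disjoint_left.1 (hdisj k σ (e i) hσk h.1 hne) hσx hi
        · rw [if_neg h] at hi; exact hi
    rw [hc]
    apply sigma0_iUnion hξ
    intro i
    by_cases h : ht (e i) = k ∧ f (e i) ≠ n
    · rw [if_pos h]; exact hTr _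
    · rw [if_neg h]; exact sigma0_empty _ _
  -- F ⁻¹' {n} = ⋃ m, ⋂ k, A (m + k)
  have heq : F ⁻¹' {n} = ⋃ m, ⋂ k, A (m + k) := by
    ext x
    simp only [Set.mem_preimage, Set.mem_singleton_iff, Set.mem_iUnion, Set.mem_iInter]
    constructor
    · intro hFx
      obtain ⟨m, hm⟩ : ∃ m, ∀ σ ∈ {σ : List ℕ | x ∈ Tr σ ∧ f σ ≠ F x}, ht σ < m := by
        obtain ⟨m, hm⟩ := ((hstab x).image ht).bddAbove
        exact ⟨m + 1, fun σ hσ =>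
          Nat.lt_succ_of_le (hm (Set.mem_image_of_mem ht hσ))⟩
      refine ⟨m, fun k => ?_⟩
      obtain ⟨σ, hσk, hσx⟩ := hcover (m + k) x
      refine (memA _ x).2 ⟨σ, hσk, ?_, hσx⟩
      by_contra hne
      have : ht σ < m := hm σ ⟨hσx, fun h => hne (h.trans hFx)⟩
      omega
    · rintro ⟨m, hm⟩
      by_contra hne
      -- the true value F x also stabilizes
      obtain ⟨m', hm'⟩ : ∃ m', ∀ σ ∈ {σ : List ℕ | x ∈ Tr σ ∧ f σ ≠ F x}, ht σ < m' := by
        obtain ⟨m', hb⟩ := ((hstab x).image ht).bddAbove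
        exact ⟨m' + 1, fun σ hσ =>
          Nat.lt_succ_of_le (hb (Set.mem_image_of_mem ht hσ))⟩
      obtain ⟨σ, hσk, hσn, hσx⟩ := (memA (m + m') x).1 (hm m')
      obtain ⟨τ, hτk, hτx⟩ := hcover (m + m') x
      have hτn : f τ = F x := by
        by_contra h
        have := hm' τ ⟨hτx, h⟩
        omega
      have hστ : σ = τ := by
        by_contra h
        exact Set.disjoint_left.1 (hdisj (m + m') σ τ hσk hτk h) hσx hτx
      exact hne (by rw [← hσn, hστ, hτn])
  rw [heq, sigma0_def]
  refine Or.inr ⟨fun m => ⋂ k, A (m + k), fun m => ⟨ξ, hξ, lt_add_one ξ⟩, ?_, rfl⟩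
  intro m
  rw [Set.compl_iInter]
  exact sigma0_iUnion hξ _ (fun k => hAc (m + k))
end

section
/- In a two-player game with payoff set open for player I (player I wins a run iff some finite prefix of the run already guarantees the win), the game is determined: either player I has a winning strategy or player II has a winning strategy. -/
noncomputable section GaleStewart

open Classical

/-- The first `n` values of `x` as a list. -/
private def pre (x : ℕ → ℕ) (n : ℕ) : List ℕ := (List.range n).map x

private lemma pre_length (x : ℕ → ℕ) (n : ℕ) : (pre x n).length = n := by
  simp [pre]

private lemma pre_succ (x : ℕ → ℕ) (n : ℕ) : pre x (n + 1) = pre x n ++ [x n] := by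
  simp [pre, List.range_succ]

private lemma pre_getD (x : ℕ → ℕ) {i n : ℕ} (h : i < n) : (pre x n).getD i 0 = x i := by
  rw [List.getD_eq_getElem _ _ (by simpa [pre_length] using h)]
  simp [pre]

private lemma eq_of_pre_eq {x y : ℕ → ℕ} {n : ℕ} (h : pre y n = pre x n) :
    ∀ i < n, y i = x i := by
  intro i hi
  have h2 : (pre y n).getD i 0 = (pre x n).getD i 0 := by rw [h]
  rwa [pre_getD y hi, pre_getD x hi] at h2

/-- Player I has a winning strategy from position `p`. -/
private def WinI (A : Set (ℕ → ℕ)) (p : List ℕ) : Prop :=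
  ∃ s : List ℕ → ℕ, ∀ x : ℕ → ℕ, pre x p.length = p →
    (∀ n : ℕ, p.length ≤ 2 * n → x (2 * n) = s (pre x (2 * n))) → x ∈ A

/-- If I can win after playing `a` at an even position `p`, I can win at `p`. -/
private lemma winI_of_move {A : Set (ℕ → ℕ)} {p : List ℕ} (hp : Even p.length) (a : ℕ)
    (h : WinI A (p ++ [a])) : WinI A p := by
  obtain ⟨s', hs'⟩ := h
  obtain ⟨m, hm⟩ := hp
  have h2 : 2 * m = p.length := by omega
  refine ⟨fun q => if q.length = p.length then a else s' q, fun x hx hf => ?_⟩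
  have hxa : x p.length = a := by
    have h3 := hf m (le_of_eq h2.symm)
    dsimp only at h3
    rw [if_pos (by rw [pre_length]; exact h2)] at h3
    rwa [h2] at h3
  have hx1 : pre x (p ++ [a]).length = p ++ [a] := by
    rw [List.length_append, List.length_singleton, pre_succ, hx, hxa]
  refine hs' x hx1 (fun n hn => ?_)
  rw [List.length_append, List.length_singleton] at hn
  have h3 := hf n (by omega)
  dsimp only at h3
  rwa [if_neg (by rw [pre_length]; omega)] at h3

/-- If I can win after every reply `b` of II at position `p ++ [a]`,
then I can win at `p ++ [a]`. -/
private lemma winI_of_all_replies {A : Set (ℕ → ℕ)} {p : List ℕ} (a : ℕ)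
    (h : ∀ b : ℕ, WinI A (p ++ [a, b])) : WinI A (p ++ [a]) := by
  choose s hs using h
  refine ⟨fun q => s (q.getD (p.length + 1) 0) q, fun x hx hf => ?_⟩
  set b := x (p.length + 1) with hb
  have hlen : (p ++ [a]).length = p.length + 1 := by simp
  have hx' : pre x (p.length + 1) = p ++ [a] := by rw [← hlen]; exact hx
  have hx2 : pre x (p ++ [a, b]).length = p ++ [a, b] := by
    have hl2 : (p ++ [a, b]).length = p.length + 1 + 1 := by simp
    rw [hl2, pre_succ, hx', ← hb]
    simp
  refine hs b x hx2 (fun n hn => ?_)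
  have hlen2 : (p ++ [a, b]).length = p.length + 2 := by simp
  rw [hlen2] at hn
  have hfn := hf n (by rw [hlen]; omega)
  dsimp only at hfn
  rwa [pre_getD x (show p.length + 1 < 2 * n by omega), ← hb] at hfn

/-- Gale–Stewart determinacy of open games on `ℕ`: if the payoff set `A` for player I
is open in Baire space, then either player I or player II has a winning strategy.
Player I plays the coordinates `x (2*n)`, player II plays the coordinates
`x (2*n+1)`; a strategy maps finite positions to moves. -/
theorem open_games_determined (A : Set (ℕ → ℕ)) (hA : IsOpen A) :
    (∃ sI : List ℕ → ℕ, ∀ x : ℕ → ℕ,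
        (∀ n : ℕ, x (2 * n) = sI ((List.range (2 * n)).map x)) → x ∈ A) ∨
    (∃ sII : List ℕ → ℕ, ∀ x : ℕ → ℕ,
        (∀ n : ℕ, x (2 * n + 1) = sII ((List.range (2 * n + 1)).map x)) → x ∉ A) := by
  by_cases h : WinI A []
  · obtain ⟨s, hs⟩ := h
    exact Or.inl ⟨s, fun x hx => hs x rfl (fun n _ => hx n)⟩
  · -- Player II's strategy: keep the invariant `¬ WinI` along the play.
    refine Or.inr ⟨fun q => if hq : ∃ b, ¬ WinI A (q ++ [b]) then hq.choose else 0,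
      fun x hx hxA => ?_⟩
    have hx' : ∀ n : ℕ, x (2 * n + 1) =
        if hq : ∃ b, ¬ WinI A (pre x (2 * n + 1) ++ [b]) then hq.choose else 0 := hx
    have key : ∀ n : ℕ, ¬ WinI A (pre x (2 * n)) := by
      intro n
      induction n with
      | zero => simpa [pre] using h
      | succ n ih =>
        have hev : Even (pre x (2 * n)).length := by rw [pre_length]; exact even_two_mul n
        have h1 : ¬ WinI A (pre x (2 * n + 1)) := by
          rw [pre_succ]
          intro hw
          exact ih (winI_of_move hev (x (2 * n)) hw)
        have h2 : ∃ b, ¬ WinI A (pre x (2 * n + 1) ++ [b]) := by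
          by_contra hco
          push_neg at hco
          refine h1 ?_
          rw [pre_succ]
          refine winI_of_all_replies (x (2 * n)) (fun b => ?_)
          have h4 := hco b
          rwa [pre_succ, List.append_assoc] at h4
        have hstep := hx' n
        rw [dif_pos h2] at hstep
        have h3 : ¬ WinI A (pre x (2 * n + 1) ++ [x (2 * n + 1)]) := by
          rw [hstep]; exact h2.choose_spec
        rw [← pre_succ] at h3
        have he : 2 * (n + 1) = 2 * n + 1 + 1 := by omega
        rwa [he]
    -- derive a contradiction from openness of `A`
    obtain ⟨I, u, hu, hsub⟩ := isOpen_pi_iff.mp hA x hxA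
    set m : ℕ := I.sup id + 1 with hm
    refine key m ⟨fun _ => 0, fun y hy _ => hsub (fun i hi => ?_)⟩
    have hy' : pre y (2 * m) = pre x (2 * m) := by rwa [pre_length] at hy
    have him : i < 2 * m := by
      have : i ≤ I.sup id := Finset.le_sup (f := id) hi
      omega
    rw [eq_of_pre_eq hy' i him]
    exact (hu i hi).2

end GaleStewart
end
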